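/- Let U* ∈ ℝ^{n×r}, let F be a set of orthogonal r×r matrices, let Qᵃ ∈ F and set U^{a,*} := U*Qᵃ. Let γ ∈ (0,1), ε̄ > 0, and set ε₀ := (1−γ)ε̄/2. Let (U^t)_{t≥0} be a sequence in ℝ^{n×r} with ‖U^0 − U^{a,*}‖_F ≤ ε₀, and suppose that for every t ≥ 0 with ‖U^t − U^{a,*}‖_F ≤ ε̄ there exists Q^t ∈ F attaining min_{Q∈F}‖U^t − U*Q‖_F and satisfying ‖U^{t+1} − U*Q^t‖_F ≤ γ‖U^t − U*Q^t‖_F. Then ‖U^t − U^{a,*}‖_F ≤ ε̄ for every t ≥ 0. -/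
import Mathlib

open Matrix Finset

/-- Frobenius norm of a real matrix. -/
noncomputable def frob {m r : ℕ} (M : Matrix (Fin m) (Fin r) ℝ) : ℝ :=
  Real.sqrt (∑ i, ∑ j, (M i j) ^ 2)

attribute [local instance] Matrix.frobeniusSeminormedAddCommGroup

lemma frob_eq_norm {m r : ℕ} (M : Matrix (Fin m) (Fin r) ℝ) :
    frob M = ‖M‖ := by
  rw [Matrix.frobenius_norm_def, frob, Real.sqrt_eq_rpow]
  congr 1
  congr 1
  funext i
  congr 1
  funext j
  rw [Real.norm_eq_abs, Real.rpow_two, sq_abs]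

lemma frob_triangle {m r : ℕ} (A B : Matrix (Fin m) (Fin r) ℝ) :
    frob (A + B) ≤ frob A + frob B := by
  rw [frob_eq_norm, frob_eq_norm, frob_eq_norm]
  exact norm_add_le A B

lemma frob_neg {m r : ℕ} (M : Matrix (Fin m) (Fin r) ℝ) : frob (-M) = frob M := by
  simp [frob]

lemma frob_tri3 {m r : ℕ} (A B C D : Matrix (Fin m) (Fin r) ℝ) :
    frob (A - D) ≤ frob (A - B) + frob (B - C) + frob (C - D) := by
  have h1 : A - D = (A - B) + ((B - C) + (C - D)) := by abel
  rw [h1]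
  calc frob ((A - B) + ((B - C) + (C - D))) ≤ frob (A - B) + frob ((B - C) + (C - D)) :=
        frob_triangle _ _
    _ ≤ frob (A - B) + (frob (B - C) + frob (C - D)) := by
        have := frob_triangle (B - C) (C - D); linarith
    _ = _ := by ring

/-- Iterates remain in a neighborhood of `U^{a,*} = U* Qᵃ`:
if `‖U⁰ − U^{a,*}‖_F ≤ ε₀ := (1−γ)ε̄/2` and, whenever `‖Uᵗ − U^{a,*}‖_F ≤ ε̄`, there is
`Qᵗ ∈ F` attaining `min_{Q∈F} ‖Uᵗ − U*Q‖_F` with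
`‖Uᵗ⁺¹ − U*Qᵗ‖_F ≤ γ‖Uᵗ − U*Qᵗ‖_F`, then `‖Uᵗ − U^{a,*}‖_F ≤ ε̄` for all `t`. -/
theorem iterates_stay_in_neighborhood {n r : ℕ}
    (Ustar : Matrix (Fin n) (Fin r) ℝ)
    (F : Set (Matrix (Fin r) (Fin r) ℝ))
    (hF : ∀ Q ∈ F, Qᵀ * Q = 1)
    (Qa : Matrix (Fin r) (Fin r) ℝ) (hQa : Qa ∈ F)
    (γ εbar : ℝ) (hγ₀ : 0 < γ) (hγ₁ : γ < 1) (hεbar : 0 < εbar)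
    (U : ℕ → Matrix (Fin n) (Fin r) ℝ)
    (hinit : frob (U 0 - Ustar * Qa) ≤ (1 - γ) * εbar / 2)
    (hstep : ∀ t : ℕ, frob (U t - Ustar * Qa) ≤ εbar →
      ∃ Qt ∈ F, (∀ Q ∈ F, frob (U t - Ustar * Qt) ≤ frob (U t - Ustar * Q)) ∧
        frob (U (t + 1) - Ustar * Qt) ≤ γ * frob (U t - Ustar * Qt)) :
    ∀ t : ℕ, frob (U t - Ustar * Qa) ≤ εbar := by
  set ε₀ : ℝ := (1 - γ) * εbar / 2 with hε₀def
  have h1γ : 0 < 1 - γ := by linarith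
  have hε₀pos : 0 < ε₀ := by rw [hε₀def]; positivity
  have hsum : ∀ t : ℕ, ∑ k ∈ Finset.range t, γ ^ k ≤ 1 / (1 - γ) := by
    intro t
    rw [geom_sum_eq (by linarith : γ ≠ 1)]
    have h1 : (γ ^ t - 1) / (γ - 1) = (1 - γ ^ t) / (1 - γ) := by
      rw [div_eq_div_iff (by linarith) (by linarith)]; ring
    rw [h1]
    have hpt : 0 ≤ γ ^ t := pow_nonneg hγ₀.le t
    gcongr
    linarith
  have hεbar_eq : ε₀ * (1 + (1 + γ) * (1 / (1 - γ))) = εbar := by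
    rw [hε₀def]; field_simp; ring
  have hbound : ∀ t : ℕ,
      ε₀ * (1 + (1 + γ) * ∑ k ∈ Finset.range t, γ ^ k) ≤ εbar := by
    intro t
    rw [← hεbar_eq]
    have := hsum t
    have hs0 : (0:ℝ) ≤ ∑ k ∈ Finset.range t, γ ^ k :=
      Finset.sum_nonneg fun k _ => pow_nonneg hγ₀.le k
    gcongr
  have key : ∀ t : ℕ,
      frob (U t - Ustar * Qa) ≤ ε₀ * (1 + (1 + γ) * ∑ k ∈ Finset.range t, γ ^ k) ∧
      ∃ Qt ∈ F, frob (U t - Ustar * Qt) ≤ γ ^ t * ε₀ := by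
    intro t
    induction t with
    | zero =>
      refine ⟨by simpa using hinit, Qa, hQa, by simpa using hinit⟩
    | succ t ih =>
      obtain ⟨hbd, Qt, hQtF, hQtb⟩ := ih
      have hle : frob (U t - Ustar * Qa) ≤ εbar := hbd.trans (hbound t)
      obtain ⟨Q', hQ'F, hmin, hcon⟩ := hstep t hle
      have h1 : frob (U t - Ustar * Q') ≤ γ ^ t * ε₀ := (hmin Qt hQtF).trans hQtb
      have h2 : frob (U (t + 1) - Ustar * Q') ≤ γ ^ (t + 1) * ε₀ := by
        calc frob (U (t + 1) - Ustar * Q') ≤ γ * frob (U t - Ustar * Q') := hcon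
          _ ≤ γ * (γ ^ t * ε₀) := by nlinarith
          _ = γ ^ (t + 1) * ε₀ := by ring
      refine ⟨?_, Q', hQ'F, h2⟩
      have htri : frob (U (t + 1) - Ustar * Qa) ≤
          frob (U (t + 1) - Ustar * Q') + frob (Ustar * Q' - U t) +
            frob (U t - Ustar * Qa) := frob_tri3 _ _ _ _
      have hsym : frob (Ustar * Q' - U t) = frob (U t - Ustar * Q') := by
        rw [← frob_neg, neg_sub]
      rw [hsym] at htri
      rw [Finset.sum_range_succ]
      have hpow : γ ^ (t + 1) = γ ^ t * γ := pow_succ γ t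
      nlinarith
  intro t
  exact (key t).1.trans (hbound t)
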